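/- arXiv:2505.02992 — 5 statements merged into one kernel-verified Lean document; each statement's English description precedes it below -/
import Mathlib

section
/- Let c, ν, k be positive real constants and let (w(t), s(t)) solve the ODE system w' = k(1 - c s), s' = w - ν s on an interval I. Let P : J → ℝ≥0 be a solution of dP/ds = ν·√(2P(s)) + k(1 - c s) with P > 0, where the range of s(t) on I is contained in J. Define L(w,s) = w - ν s + √(2P(s)). If L(w(t₀), s(t₀)) = 0 for some t₀ ∈ I, then L(w(t), s(t)) = 0 for all t ∈ I. -/
/-!
Along a trajectory, `d/dt √(2 P(s)) = P'(s) s' / √(2 P(s))`, and the equation for `P` is chosen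
so that this cancels the `-ν s'` term of `d/dt (w - ν s)`: what remains is
`L' = (k (1 - c s) / √(2 P(s))) · L`. So `L` solves a linear ODE with a continuous coefficient,
and by uniqueness (Grönwall) it vanishes identically on the interval once it vanishes at one time.
-/

open Set

section LinearODE

variable {E : Type*} [NormedAddCommGroup E] [NormedSpace ℝ E]

lemma exists_lipschitzOnWith_smul_of_continuousOn_Icc {a : ℝ → ℝ} {t₁ t₂ : ℝ}
    (ha : ContinuousOn a (Icc t₁ t₂)) :
    ∃ K, ∀ t ∈ Icc t₁ t₂, LipschitzOnWith K (fun x : E => a t • x) univ := by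
  obtain ⟨C, hC⟩ := isCompact_Icc.exists_bound_of_continuousOn ha
  refine ⟨C.toNNReal, fun t ht => ((lipschitzWith_smul (a t)).weaken ?_).lipschitzOnWith⟩
  exact NNReal.le_toNNReal_of_coe_le (hC t ht)

theorem Set.OrdConnected.eqOn_zero_of_hasDerivAt_smul_self {I : Set ℝ} (hI : I.OrdConnected)
    {f : ℝ → E} {a : ℝ → ℝ} (hf : ∀ t ∈ I, HasDerivAt f (a t • f t) t)
    (ha : ContinuousOn a I) {t₀ : ℝ} (ht₀ : t₀ ∈ I) (hf₀ : f t₀ = 0) : EqOn f 0 I := by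
  intro t ht
  have hf_cont : ContinuousOn f I := fun τ hτ => (hf τ hτ).continuousAt.continuousWithinAt
  have hzero (τ : ℝ) (u : Set ℝ) : HasDerivWithinAt (0 : ℝ → E) (a τ • (0 : ℝ → E) τ) u τ := by
    rw [Pi.zero_apply, smul_zero]
    exact hasDerivWithinAt_const τ u 0
  rcases le_total t₀ t with h | h
  · have hsub := hI.out ht₀ ht
    obtain ⟨K, hK⟩ := exists_lipschitzOnWith_smul_of_continuousOn_Icc (E := E) (ha.mono hsub)
    exact ODE_solution_unique_of_mem_Icc_right (v := fun τ x => a τ • x) (s := fun _ => univ)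
      (fun τ hτ => hK τ (Ico_subset_Icc_self hτ)) (hf_cont.mono hsub)
      (fun τ hτ => (hf τ (hsub (Ico_subset_Icc_self hτ))).hasDerivWithinAt)
      (fun _ _ => mem_univ _) continuousOn_const (fun τ _ => hzero τ _) (fun _ _ => mem_univ _)
      hf₀ ⟨h, le_rfl⟩
  · have hsub := hI.out ht ht₀
    obtain ⟨K, hK⟩ := exists_lipschitzOnWith_smul_of_continuousOn_Icc (E := E) (ha.mono hsub)
    exact ODE_solution_unique_of_mem_Icc_left (v := fun τ x => a τ • x) (s := fun _ => univ)
      (fun τ hτ => hK τ (Ioc_subset_Icc_self hτ)) (hf_cont.mono hsub)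
      (fun τ hτ => (hf τ (hsub (Ioc_subset_Icc_self hτ))).hasDerivWithinAt)
      (fun _ _ => mem_univ _) continuousOn_const (fun τ _ => hzero τ _) (fun _ _ => mem_univ _)
      hf₀ ⟨le_rfl, h⟩

end LinearODE

lemma hasDerivAt_lyapunov {c ν k t : ℝ} {w s P : ℝ → ℝ}
    (hw : HasDerivAt w (k * (1 - c * s t)) t) (hs : HasDerivAt s (w t - ν * s t) t)
    (hP : HasDerivAt P (ν * √(2 * P (s t)) + k * (1 - c * s t)) (s t)) (hPpos : 0 < P (s t)) :
    HasDerivAt (fun t => w t - ν * s t + √(2 * P (s t)))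
      (k * (1 - c * s t) / √(2 * P (s t)) * (w t - ν * s t + √(2 * P (s t)))) t := by
  have hsqrt_pos : 0 < √(2 * P (s t)) := by positivity
  have hPs : HasDerivAt (fun t => P (s t)) _ t := hP.comp t hs
  have hsqrt := (hPs.const_mul 2).sqrt (by positivity)
  refine ((hw.sub (hs.const_mul ν)).add hsqrt).congr_deriv ?_
  field_simp
  ring

theorem stmt0_general (c ν k : ℝ)
    (I J : Set ℝ) (hI : I.OrdConnected)
    (w s P : ℝ → ℝ)
    (hw : ∀ t ∈ I, HasDerivAt w (k * (1 - c * s t)) t)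
    (hs : ∀ t ∈ I, HasDerivAt s (w t - ν * s t) t)
    (hP : ∀ x ∈ J, HasDerivAt P (ν * Real.sqrt (2 * P x) + k * (1 - c * x)) x)
    (hPpos : ∀ x ∈ J, 0 < P x)
    (hrange : ∀ t ∈ I, s t ∈ J)
    (t₀ : ℝ) (ht₀ : t₀ ∈ I)
    (hL0 : w t₀ - ν * s t₀ + Real.sqrt (2 * P (s t₀)) = 0) :
    ∀ t ∈ I, w t - ν * s t + Real.sqrt (2 * P (s t)) = 0 := by
  have hL (t : ℝ) (ht : t ∈ I) := hasDerivAt_lyapunov (hw t ht) (hs t ht)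
    (hP _ (hrange t ht)) (hPpos _ (hrange t ht))
  have ha : ContinuousOn (fun t => k * (1 - c * s t) / √(2 * P (s t))) I := by
    intro t ht
    have hPs : ContinuousAt (fun t => P (s t)) t :=
      ((hP _ (hrange t ht)).comp t (hs t ht)).continuousAt
    have hsqrt_pos : 0 < √(2 * P (s t)) := Real.sqrt_pos.2 (by linarith [hPpos _ (hrange t ht)])
    have hs_cont := (hs t ht).continuousAt
    exact (ContinuousAt.div (by fun_prop) (hPs.const_mul 2).sqrt hsqrt_pos.ne').continuousWithinAt
  exact hI.eqOn_zero_of_hasDerivAt_smul_self hL ha ht₀ hL0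

theorem stmt0 (c ν k : ℝ) (hc : 0 < c) (hν : 0 < ν) (hk : 0 < k)
    (I J : Set ℝ) (hI : I.OrdConnected)
    (w s P : ℝ → ℝ)
    (hw : ∀ t ∈ I, HasDerivAt w (k * (1 - c * s t)) t)
    (hs : ∀ t ∈ I, HasDerivAt s (w t - ν * s t) t)
    (hP : ∀ x ∈ J, HasDerivAt P (ν * Real.sqrt (2 * P x) + k * (1 - c * x)) x)
    (hPpos : ∀ x ∈ J, 0 < P x)
    (hrange : ∀ t ∈ I, s t ∈ J)
    (t₀ : ℝ) (ht₀ : t₀ ∈ I)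
    (hL0 : w t₀ - ν * s t₀ + Real.sqrt (2 * P (s t₀)) = 0) :
    ∀ t ∈ I, w t - ν * s t + Real.sqrt (2 * P (s t)) = 0 :=
  stmt0_general c ν k I J hI w s P hw hs hP hPpos hrange t₀ ht₀ hL0
end

section
/- Let c, ν, k be positive real constants and let (w(t), s(t)) solve w' = k(1 - c s), s' = w - ν s on an interval I. Let N : J → ℝ≥0 solve dN/ds = -ν·√(2N(s)) + k(1 - c s) with N > 0, where the range of s(t) on I is contained in J. Define L(w,s) = w - ν s - √(2N(s)). If L(w(t₀), s(t₀)) = 0 for some t₀ ∈ I, then L(w(t), s(t)) = 0 for all t ∈ I. -/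
/-!
Differentiating `L = w - ν s - √(2 N(s))` along a solution and using the equation for `N`, the
terms in `ν` cancel and `L` turns out to solve the linear equation
`L' = -(k (1 - c s) / √(2 N(s))) L`, whose coefficient is continuous since `N > 0`.
By uniqueness for linear equations (Grönwall), a solution vanishing at `t₀` vanishes on the
whole interval.
-/

open Set

theorem eqOn_zero_of_hasDerivAt_eq_smul {E : Type*} [NormedAddCommGroup E] [NormedSpace ℝ E]
    {I : Set ℝ} (hI : I.OrdConnected) {a : ℝ → ℝ} {f : ℝ → E} (ha : ContinuousOn a I)
    (hf : ∀ t ∈ I, HasDerivAt f (a t • f t) t) {t₀ : ℝ} (ht₀ : t₀ ∈ I) (hf₀ : f t₀ = 0) :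
    EqOn f 0 I := by
  intro t ht
  have hsub : uIcc t₀ t ⊆ I := hI.uIcc_subset ht₀ ht
  obtain ⟨C, hC⟩ := isCompact_uIcc.exists_bound_of_continuousOn (ha.mono hsub)
  have hlip : ∀ u ∈ uIcc t₀ t, LipschitzOnWith C.toNNReal (fun x : E => a u • x) univ :=
    fun u hu => ((lipschitzWith_smul (a u)).weaken (by
      rw [← NNReal.coe_le_coe, coe_nnnorm, Real.coe_toNNReal']
      exact (hC u hu).trans (le_max_left C 0))).lipschitzOnWith
  have hf' : ∀ u ∈ uIcc t₀ t, HasDerivAt f (a u • f u) u := fun u hu => hf u (hsub hu)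
  have hzero (u : ℝ) : HasDerivAt (0 : ℝ → E) (a u • (0 : ℝ → E) u) u := by simp
  rcases le_total t₀ t with h | h
  · rw [uIcc_of_le h] at hlip hf' hsub
    refine ODE_solution_unique_of_mem_Icc_right (s := fun _ => univ) (g := 0)
      (fun u hu => hlip u (Ico_subset_Icc_self hu))
      (fun u hu => (hf' u hu).continuousAt.continuousWithinAt)
      (fun u hu => (hf' u (Ico_subset_Icc_self hu)).hasDerivWithinAt) (fun _ _ => trivial)
      continuousOn_const (fun u _ => (hzero u).hasDerivWithinAt)
      (fun _ _ => trivial) hf₀ (right_mem_Icc.2 h)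
  · rw [uIcc_of_ge h] at hlip hf' hsub
    refine ODE_solution_unique_of_mem_Icc_left (s := fun _ => univ) (g := 0)
      (fun u hu => hlip u (Ioc_subset_Icc_self hu))
      (fun u hu => (hf' u hu).continuousAt.continuousWithinAt)
      (fun u hu => (hf' u (Ioc_subset_Icc_self hu)).hasDerivWithinAt) (fun _ _ => trivial)
      continuousOn_const (fun u _ => (hzero u).hasDerivWithinAt)
      (fun _ _ => trivial) hf₀ (left_mem_Icc.2 h)

noncomputable def lyapunov (ν : ℝ) (N : ℝ → ℝ) (w s : ℝ) : ℝ :=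
  w - ν * s - Real.sqrt (2 * N s)

theorem hasDerivAt_lyapunov_s1 {ν : ℝ} {g w s N : ℝ → ℝ} {t : ℝ}
    (hw : HasDerivAt w (g (s t)) t) (hs : HasDerivAt s (w t - ν * s t) t)
    (hN : HasDerivAt N (-ν * Real.sqrt (2 * N (s t)) + g (s t)) (s t)) (hpos : 0 < N (s t)) :
    HasDerivAt (fun u => lyapunov ν N (w u) (s u))
      (-(g (s t) / Real.sqrt (2 * N (s t))) * lyapunov ν N (w t) (s t)) t := by
  have hq : 0 < Real.sqrt (2 * N (s t)) := Real.sqrt_pos.2 (by positivity)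
  have hsqrt := ((Real.hasDerivAt_sqrt (by positivity)).comp t ((hN.comp t hs).const_mul 2))
  refine ((hw.sub (hs.const_mul ν)).sub hsqrt).congr_deriv ?_
  simp only [lyapunov, Function.comp_apply]
  field_simp
  ring

theorem stmt1_general (c ν k : ℝ)
    (I J : Set ℝ) (hI : I.OrdConnected)
    (w s N : ℝ → ℝ)
    (hw : ∀ t ∈ I, HasDerivAt w (k * (1 - c * s t)) t)
    (hs : ∀ t ∈ I, HasDerivAt s (w t - ν * s t) t)
    (hN : ∀ x ∈ J, HasDerivAt N (-ν * Real.sqrt (2 * N x) + k * (1 - c * x)) x)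
    (hNpos : ∀ x ∈ J, 0 < N x)
    (hrange : ∀ t ∈ I, s t ∈ J)
    (t₀ : ℝ) (ht₀ : t₀ ∈ I)
    (hL0 : w t₀ - ν * s t₀ - Real.sqrt (2 * N (s t₀)) = 0) :
    ∀ t ∈ I, w t - ν * s t - Real.sqrt (2 * N (s t)) = 0 := by
  have hs_cont : ContinuousOn s I := fun t ht => (hs t ht).continuousAt.continuousWithinAt
  have hN_cont : ContinuousOn N J := fun x hx => (hN x hx).continuousAt.continuousWithinAt
  have hcoeff : ContinuousOn (fun t => -(k * (1 - c * s t) / Real.sqrt (2 * N (s t)))) I :=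
    ((continuousOn_const.mul (continuousOn_const.sub (continuousOn_const.mul hs_cont))).div
      ((continuousOn_const.mul (hN_cont.comp hs_cont hrange)).sqrt)
      fun t ht => (Real.sqrt_pos.2 (mul_pos two_pos (hNpos _ (hrange t ht)))).ne').neg
  have hL : ∀ t ∈ I, HasDerivAt (fun u => lyapunov ν N (w u) (s u))
      (-(k * (1 - c * s t) / Real.sqrt (2 * N (s t))) • lyapunov ν N (w t) (s t)) t :=
    fun t ht => hasDerivAt_lyapunov_s1 (g := fun x => k * (1 - c * x)) (hw t ht) (hs t ht)
      (hN _ (hrange t ht)) (hNpos _ (hrange t ht))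
  exact eqOn_zero_of_hasDerivAt_eq_smul hI hcoeff hL ht₀ hL0

theorem stmt1 (c ν k : ℝ) (hc : 0 < c) (hν : 0 < ν) (hk : 0 < k)
    (I J : Set ℝ) (hI : I.OrdConnected)
    (w s N : ℝ → ℝ)
    (hw : ∀ t ∈ I, HasDerivAt w (k * (1 - c * s t)) t)
    (hs : ∀ t ∈ I, HasDerivAt s (w t - ν * s t) t)
    (hN : ∀ x ∈ J, HasDerivAt N (-ν * Real.sqrt (2 * N x) + k * (1 - c * x)) x)
    (hNpos : ∀ x ∈ J, 0 < N x)
    (hrange : ∀ t ∈ I, s t ∈ J)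
    (t₀ : ℝ) (ht₀ : t₀ ∈ I)
    (hL0 : w t₀ - ν * s t₀ - Real.sqrt (2 * N (s t₀)) = 0) :
    ∀ t ∈ I, w t - ν * s t - Real.sqrt (2 * N (s t)) = 0 :=
  stmt1_general c ν k I J hI w s N hw hs hN hNpos hrange t₀ ht₀ hL0
end

section
/- Let 0 < ν < 2√(kc), θ = √(4kc-ν²)/2, and B > 0. Define f(t) = B·e^{-ν(t-t₁)/2}·(cos(θ(t-t₁)) - (ν/(2θ))·sin(θ(t-t₁))) for t ≤ t₁. Then f(t) ≥ 0 for all t ∈ [t₂, t₁], with strict inequality for t ∈ (t₂, t₁], where t₂ = t₁ - (1/θ)(π - arctan(2θ/ν)), and f(t₂) = 0. -/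
/-!
Write `a = ν / (2θ)`. The factor `cos s - a sin s` equals `√(1 + a²) cos (s + arctan a)`, and
`arctan (2θ/ν) = π/2 - arctan a`, so on `[t₂, t₁]` the phase `θ (t - t₁) + arctan a` runs through
`[-π/2, arctan a] ⊆ [-π/2, π/2)`, where the cosine is nonnegative and vanishes only at `-π/2`,
i.e. at `t = t₂`.
-/

open Real

lemma cos_sub_mul_sin_eq_sqrt_mul_cos (a s : ℝ) :
    cos s - a * sin s = √(1 + a ^ 2) * cos (s + arctan a) := by
  rw [cos_add, cos_arctan, sin_arctan]
  field_simp

lemma cos_sub_mul_sin_nonneg {a s : ℝ} (h₁ : -(π / 2 + arctan a) ≤ s) (h₂ : s ≤ 0) :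
    0 ≤ cos s - a * sin s := by
  rw [cos_sub_mul_sin_eq_sqrt_mul_cos]
  have : 0 ≤ cos (s + arctan a) :=
    cos_nonneg_of_mem_Icc ⟨by linarith, by linarith [arctan_lt_pi_div_two a]⟩
  positivity

lemma cos_sub_mul_sin_pos {a s : ℝ} (h₁ : -(π / 2 + arctan a) < s) (h₂ : s ≤ 0) :
    0 < cos s - a * sin s := by
  rw [cos_sub_mul_sin_eq_sqrt_mul_cos]
  have : 0 < cos (s + arctan a) :=
    cos_pos_of_mem_Ioo ⟨by linarith, by linarith [arctan_lt_pi_div_two a]⟩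
  positivity

lemma cos_sub_mul_sin_neg_pi_div_two_add_arctan (a : ℝ) :
    cos (-(π / 2 + arctan a)) - a * sin (-(π / 2 + arctan a)) = 0 := by
  rw [cos_sub_mul_sin_eq_sqrt_mul_cos, neg_add, neg_add_cancel_right, cos_neg, cos_pi_div_two,
    mul_zero]

lemma sub_sq_pos_of_lt_two_mul_sqrt {k c ν : ℝ} (hν : 0 < ν) (h : ν < 2 * √(k * c)) :
    0 < 4 * k * c - ν ^ 2 := by
  have hkc : 0 < k * c := sqrt_pos.mp (by linarith)
  have : (ν / 2) ^ 2 < k * c := (lt_sqrt (by positivity)).mp (by linarith)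
  nlinarith

lemma arctan_div_eq_pi_div_two_sub_arctan {x y : ℝ} (hx : 0 < x) (hy : 0 < y) :
    arctan (x / y) = π / 2 - arctan (y / x) := by
  rw [← inv_div y x, arctan_inv_of_pos (by positivity)]

theorem stmt8_general (k c ν : ℝ) (hν : 0 < ν)
    (hweak : ν < 2 * Real.sqrt (k * c))
    (θ : ℝ) (hθ : θ = Real.sqrt (4 * k * c - ν ^ 2) / 2)
    (B t₁ : ℝ) (hB : 0 < B)
    (f : ℝ → ℝ)
    (hf : f = fun t => B * Real.exp (-ν * (t - t₁) / 2) *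
      (Real.cos (θ * (t - t₁)) - ν / (2 * θ) * Real.sin (θ * (t - t₁))))
    (t₂ : ℝ) (ht₂ : t₂ = t₁ - (1 / θ) * (Real.pi - Real.arctan (2 * θ / ν))) :
    (∀ t ∈ Set.Icc t₂ t₁, 0 ≤ f t) ∧
    (∀ t ∈ Set.Ioc t₂ t₁, 0 < f t) ∧ f t₂ = 0 := by
  have hθpos : 0 < θ := hθ ▸ by positivity [sub_sq_pos_of_lt_two_mul_sqrt hν hweak]
  have hphase₂ : θ * (t₂ - t₁) = -(π / 2 + arctan (ν / (2 * θ))) := by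
    rw [ht₂, arctan_div_eq_pi_div_two_sub_arctan (by positivity) hν]
    field_simp
    ring
  have hphase_le {t} (ht : t ≤ t₁) : θ * (t - t₁) ≤ 0 :=
    mul_nonpos_of_nonneg_of_nonpos hθpos.le (by linarith)
  have hphase_ge {t} (ht : t₂ ≤ t) : -(π / 2 + arctan (ν / (2 * θ))) ≤ θ * (t - t₁) :=
    hphase₂ ▸ by gcongr
  have hphase_gt {t} (ht : t₂ < t) : -(π / 2 + arctan (ν / (2 * θ))) < θ * (t - t₁) :=
    hphase₂ ▸ by gcongr
  subst hf
  refine ⟨fun t ⟨h₂, h₁⟩ => ?_, fun t ⟨h₂, h₁⟩ => ?_, ?_⟩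
  · have := cos_sub_mul_sin_nonneg (hphase_ge h₂) (hphase_le h₁)
    positivity
  · have := cos_sub_mul_sin_pos (hphase_gt h₂) (hphase_le h₁)
    positivity
  · simp only [hphase₂, cos_sub_mul_sin_neg_pi_div_two_add_arctan, mul_zero]

theorem stmt8 (k c ν : ℝ) (hk : 0 < k) (hc : 0 < c) (hν : 0 < ν)
    (hweak : ν < 2 * Real.sqrt (k * c))
    (θ : ℝ) (hθ : θ = Real.sqrt (4 * k * c - ν ^ 2) / 2)
    (B t₁ : ℝ) (hB : 0 < B)
    (f : ℝ → ℝ)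
    (hf : f = fun t => B * Real.exp (-ν * (t - t₁) / 2) *
      (Real.cos (θ * (t - t₁)) - ν / (2 * θ) * Real.sin (θ * (t - t₁))))
    (t₂ : ℝ) (ht₂ : t₂ = t₁ - (1 / θ) * (Real.pi - Real.arctan (2 * θ / ν))) :
    (∀ t ∈ Set.Icc t₂ t₁, 0 ≤ f t) ∧
    (∀ t ∈ Set.Ioc t₂ t₁, 0 < f t) ∧ f t₂ = 0 :=
  stmt8_general k c ν hν hweak θ hθ B t₁ hB f hf t₂ ht₂
end

section
/- Consider G' = -G² + ν(t)G - k c(t) with ν(t) ≤ ν₊, c(t) ≥ c₋, k > 0, and ν₊ ≥ 2√(k c₋) (median or strong alignment). If G(0) < G♯ := (ν₊ - √(ν₊² - 4kc₋))/2, then G(t) → -∞ in finite time. -/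
/-!
Write `G♯ = a ≤ b` for the roots of `X² - ν₊X + kc₋`. The right-hand side is at most
`-(G - a)(G - b)` when `G ≥ 0` and at most `-G²` when `G ≤ 0`, so it is `≤ -η < 0` uniformly
on `G ≤ max G(0) 0 < a`. Comparing with the line `G(0) - ηt/2` shows that `G` stays there and
decreases linearly, hence becomes negative; from then on `G' ≤ -G²`, and `t - 1/G(t)` is
nonincreasing, which forces `G` to blow up before time `T - 1/G(T)`.
-/

lemma riccati_rhs_le_of_nonneg {k cm c ν νp a b x : ℝ} (hk : 0 ≤ k) (hc : cm ≤ c)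
    (hν : ν ≤ νp) (hsum : a + b = νp) (hprod : a * b = k * cm) (hx : 0 ≤ x) :
    -x ^ 2 + ν * x - k * c ≤ -((a - x) * (b - x)) := by
  have hνx : ν * x ≤ νp * x := mul_le_mul_of_nonneg_right hν hx
  have hkc : k * cm ≤ k * c := mul_le_mul_of_nonneg_left hc hk
  nlinarith

lemma riccati_rhs_le_neg_sq {k c ν x : ℝ} (hkc : 0 ≤ k * c) (hν : 0 ≤ ν) (hx : x ≤ 0) :
    -x ^ 2 + ν * x - k * c ≤ -x ^ 2 := by
  nlinarith [mul_nonpos_of_nonneg_of_nonpos hν hx]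

lemma riccati_rhs_le_of_le {k cm c ν νp a b x y : ℝ} (hk : 0 ≤ k) (hc : cm ≤ c)
    (hν₀ : 0 ≤ ν) (hν : ν ≤ νp) (hsum : a + b = νp) (hprod : a * b = k * cm)
    (hab : a ≤ b) (hy : 0 ≤ y) (hya : y ≤ a) (hxy : x ≤ y) :
    -x ^ 2 + ν * x - k * c ≤ -((a - y) * (b - y)) := by
  rcases le_total x 0 with hx | hx
  · have hkc : a * b ≤ k * c := hprod ▸ mul_le_mul_of_nonneg_left hc hk
    have hshift : (a - y) * (b - y) ≤ a * b := by nlinarith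
    nlinarith [mul_nonpos_of_nonneg_of_nonpos hν₀ hx]
  · have := riccati_rhs_le_of_nonneg hk hc hν hsum hprod hx
    nlinarith

lemma quadratic_roots_spec {p q : ℝ} (hq : 0 < q) (hpq : 2 * √q ≤ p) :
    0 < (p - √(p ^ 2 - 4 * q)) / 2 ∧
      (p - √(p ^ 2 - 4 * q)) / 2 ≤ (p + √(p ^ 2 - 4 * q)) / 2 ∧
      (p - √(p ^ 2 - 4 * q)) / 2 * ((p + √(p ^ 2 - 4 * q)) / 2) = q := by
  have hsq : √q ^ 2 = q := Real.sq_sqrt hq.le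
  have hd : 0 ≤ p ^ 2 - 4 * q := by nlinarith [Real.sqrt_nonneg q]
  have hs : √(p ^ 2 - 4 * q) ^ 2 = p ^ 2 - 4 * q := Real.sq_sqrt hd
  have hs₀ : 0 ≤ √(p ^ 2 - 4 * q) := Real.sqrt_nonneg _
  have hp : 0 < p := by nlinarith [Real.sqrt_pos.2 hq]
  refine ⟨?_, by linarith, by linear_combination (-1 / 4 : ℝ) * hs⟩
  nlinarith

lemma le_sub_mul_of_hasDerivAt_lt {G G' : ℝ → ℝ} {η : ℝ} (hη : 0 ≤ η)
    (hG : ∀ t, 0 ≤ t → HasDerivAt G (G' t) t) (hG' : ∀ t, 0 ≤ t → G t ≤ G 0 → G' t < -η) :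
    ∀ t, 0 ≤ t → G t ≤ G 0 - η * t := by
  intro T hT
  have hB : ∀ t, HasDerivAt (fun t => G 0 - η * t) (-η) t := fun t => by
    simpa using ((hasDerivAt_id t).const_mul η).const_sub (G 0)
  refine image_le_of_deriv_right_lt_deriv_boundary (a := 0) (b := T)
    (fun t ht => (hG t ht.1).continuousAt.continuousWithinAt)
    (fun t ht => (hG t ht.1).hasDerivWithinAt) (by simp) hB
    (fun t ht hGt => hG' t ht.1 ?_) ⟨hT, le_rfl⟩
  rw [hGt]
  nlinarith [ht.1]

lemma exists_nonneg_of_deriv_le_neg_sq {G G' : ℝ → ℝ} {T : ℝ}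
    (hG : ∀ t, T ≤ t → HasDerivAt G (G' t) t) (hG' : ∀ t, T ≤ t → G' t ≤ -G t ^ 2) :
    ∃ t, T ≤ t ∧ 0 ≤ G t := by
  by_contra! hneg
  have hf : ∀ t, T ≤ t → HasDerivAt (fun t => t - (G t)⁻¹) (1 - -G' t / G t ^ 2) t :=
    fun t ht => (hasDerivAt_id t).sub ((hG t ht).inv (hneg t ht).ne)
  have hf' : ∀ t, T ≤ t → 1 - -G' t / G t ^ 2 ≤ 0 := fun t ht => by
    have hG2 : 0 < G t ^ 2 := by nlinarith [hneg t ht]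
    have : G' t / G t ^ 2 ≤ -1 := by
      rw [div_le_iff₀ hG2]
      linarith [hG' t ht]
    linarith [neg_div (G t ^ 2) (G' t)]
  set τ := T - (G T)⁻¹
  have hτ : T ≤ τ := by linarith [inv_lt_zero.2 (hneg T le_rfl)]
  have hmono := image_le_of_deriv_right_le_deriv_boundary (a := T) (b := τ)
    (fun t ht => (hf t ht.1).continuousAt.continuousWithinAt)
    (fun t ht => (hf t ht.1).hasDerivWithinAt) (B' := 0) le_rfl continuousOn_const
    (fun _ _ => hasDerivWithinAt_const _ _ _) (fun t ht => hf' t ht.1) ⟨hτ, le_rfl⟩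
  have : 0 ≤ (G τ)⁻¹ := by simpa [τ] using hmono
  linarith [inv_lt_zero.2 (hneg τ hτ)]

theorem stmt11_general (k cm νp : ℝ) (hk : 0 < k) (hc : 0 < cm)
    (hmed : 2 * Real.sqrt (k * cm) ≤ νp)
    (ν c : ℝ → ℝ) (hνb : ∀ t, 0 < ν t ∧ ν t ≤ νp) (hcb : ∀ t, cm ≤ c t)
    (G₀ : ℝ) (hG₀ : G₀ < (νp - Real.sqrt (νp ^ 2 - 4 * k * cm)) / 2) :
    ¬ ∃ G : ℝ → ℝ, G 0 = G₀ ∧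
      ∀ t, 0 ≤ t → HasDerivAt G (-(G t) ^ 2 + ν t * G t - k * c t) t := by
  rintro ⟨G, rfl, hG⟩
  rw [mul_assoc 4 k cm] at hG₀
  obtain ⟨ha, hab, hprod⟩ := quadratic_roots_spec (mul_pos hk hc) hmed
  set a := (νp - √(νp ^ 2 - 4 * (k * cm))) / 2
  set b := (νp + √(νp ^ 2 - 4 * (k * cm))) / 2
  set y := max (G 0) 0
  have hya : y < a := max_lt hG₀ ha
  set η := (a - y) * (b - y)
  have hη : 0 < η := mul_pos (by linarith) (by linarith)
  have hdecay : ∀ t, 0 ≤ t → G t ≤ G 0 - η / 2 * t :=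
    le_sub_mul_of_hasDerivAt_lt (half_pos hη).le hG fun t _ ht =>
      (riccati_rhs_le_of_le hk.le (hcb t) (hνb t).1.le (hνb t).2 (by ring) hprod hab
        (le_max_right _ _) hya.le (ht.trans (le_max_left _ _))).trans_lt (by linarith)
  set T := 2 / η * (|G 0| + 1)
  have hT : 0 ≤ T := by positivity
  have hneg : ∀ t, T ≤ t → G t < 0 := fun t ht => by
    have hηT : η / 2 * T = |G 0| + 1 := by simp only [T]; field_simp
    nlinarith [hdecay t (hT.trans ht), le_abs_self (G 0)]
  obtain ⟨t, ht, hGt⟩ := exists_nonneg_of_deriv_le_neg_sq (fun t ht => hG t (hT.trans ht))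
    fun t ht => riccati_rhs_le_neg_sq (mul_nonneg hk.le (hc.le.trans (hcb t))) (hνb t).1.le
      (hneg t ht).le
  exact (hneg t ht).not_ge hGt

theorem stmt11 (k cm νp : ℝ) (hk : 0 < k) (hc : 0 < cm) (hν : 0 < νp)
    (hmed : 2 * Real.sqrt (k * cm) ≤ νp)
    (ν c : ℝ → ℝ) (hνb : ∀ t, 0 < ν t ∧ ν t ≤ νp) (hcb : ∀ t, cm ≤ c t)
    (G₀ : ℝ) (hG₀ : G₀ < (νp - Real.sqrt (νp ^ 2 - 4 * k * cm)) / 2) :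
    ¬ ∃ G : ℝ → ℝ, G 0 = G₀ ∧
      ∀ t, 0 ≤ t → HasDerivAt G (-(G t) ^ 2 + ν t * G t - k * c t) t :=
  stmt11_general k cm νp hk hc hmed ν c hνb hcb G₀ hG₀
end

section
/- Let k, c₊ > 0 and 0 < ν₋ < 2√(kc₊), θ = √(4kc₊ - ν₋²)/2. Let N : ℝ≥0 → ℝ solve dN/ds = -ν₋√(2N) + k(1 - c₊ s) on an interval where N > 0, and set 𝗐(s) = ν₋ s + √(2N(s)). Then 𝗐 is concave on any interval where N > 0, i.e. 𝗐''(s) ≤ 0. -/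
/-! Write `S = √(2N)`. The equation gives `S' = (-ν₋ S + k(1 - c₊s)) / S`, hence
`𝗐' = k(1 - c₊s) / S` and `𝗐'' = -k (c₊S² - ν₋(1 - c₊s)S + k(1 - c₊s)²) / S³`.
The quadratic form `c₊X² - ν₋XY + kY²` is positive definite since `ν₋² < 4kc₊`, so `𝗐'' ≤ 0`. -/

open Real

lemma quadratic_form_nonneg {a b c : ℝ} (ha : 0 < a) (hdisc : b ^ 2 ≤ 4 * a * c) (x y : ℝ) :
    0 ≤ a * x ^ 2 + b * x * y + c * y ^ 2 := by
  have h : 0 ≤ 4 * a * (a * x ^ 2 + b * x * y + c * y ^ 2) := by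
    have hsq : 4 * a * (a * x ^ 2 + b * x * y + c * y ^ 2)
        = (2 * a * x + b * y) ^ 2 + (4 * a * c - b ^ 2) * y ^ 2 := by ring
    rw [hsq]
    have := sub_nonneg.2 hdisc
    positivity
  exact nonneg_of_mul_nonneg_right h (by positivity)

section Ode

variable {ν : ℝ} {N g : ℝ → ℝ} {x : ℝ}

lemma hasDerivAt_sqrt_two_mul_of_ode (hN : HasDerivAt N (-ν * √(2 * N x) + g x) x)
    (hpos : 0 < N x) :
    HasDerivAt (fun y => √(2 * N y)) ((-ν * √(2 * N x) + g x) / √(2 * N x)) x := by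
  convert (hN.const_mul 2).sqrt (by positivity) using 1
  rw [mul_div_mul_left _ _ two_ne_zero]

lemma hasDerivAt_linear_add_sqrt_of_ode (hN : HasDerivAt N (-ν * √(2 * N x) + g x) x)
    (hpos : 0 < N x) :
    HasDerivAt (fun y => ν * y + √(2 * N y)) (g x / √(2 * N x)) x := by
  have hS : 0 < √(2 * N x) := sqrt_pos.2 (by positivity)
  refine (((hasDerivAt_id' x).const_mul ν).add
    (hasDerivAt_sqrt_two_mul_of_ode hN hpos)).congr_deriv ?_
  field_simp
  ring

lemma hasDerivAt_div_sqrt_of_ode (hN : HasDerivAt N (-ν * √(2 * N x) + g x) x)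
    (hpos : 0 < N x) {g' : ℝ} (hg : HasDerivAt g g' x) :
    HasDerivAt (fun y => g y / √(2 * N y))
      ((g' * √(2 * N x) ^ 2 + ν * g x * √(2 * N x) - g x ^ 2) / √(2 * N x) ^ 3) x := by
  have hS : 0 < √(2 * N x) := sqrt_pos.2 (by positivity)
  refine (hg.div (hasDerivAt_sqrt_two_mul_of_ode hN hpos) hS.ne').congr_deriv ?_
  field_simp
  ring

end Ode

theorem stmt12 (k cp νm : ℝ) (hk : 0 < k) (hc : 0 < cp) (hν : 0 < νm)
    (hweak : νm < 2 * Real.sqrt (k * cp))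
    (J : Set ℝ) (hJ : J.OrdConnected)
    (N : ℝ → ℝ)
    (hN : ∀ x ∈ J, HasDerivAt N (-νm * Real.sqrt (2 * N x) + k * (1 - cp * x)) x)
    (hNpos : ∀ x ∈ J, 0 < N x) :
    ConcaveOn ℝ J (fun x => νm * x + Real.sqrt (2 * N x)) := by
  have hdisc : (-νm) ^ 2 ≤ 4 * cp * k := by
    have := (lt_sqrt (by positivity)).1 (show νm / 2 < √(k * cp) by linarith)
    linarith
  have haffine (x : ℝ) : HasDerivAt (fun y => k * (1 - cp * y)) (-k * cp) x := by
    refine ((((hasDerivAt_id' x).const_mul cp).const_sub 1).const_mul k).congr_deriv ?_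
    ring
  have hw' (x) (hx : x ∈ J) := hasDerivAt_linear_add_sqrt_of_ode (g := fun y => k * (1 - cp * y))
    (hN x hx) (hNpos x hx)
  have hw'' (x) (hx : x ∈ J) := hasDerivAt_div_sqrt_of_ode (hN x hx) (hNpos x hx) (haffine x)
  refine concaveOn_of_hasDerivWithinAt2_nonpos hJ.convex
    (fun x hx => (hw' x hx).continuousAt.continuousWithinAt)
    (fun x hx => (hw' x (interior_subset hx)).hasDerivWithinAt)
    (fun x hx => (hw'' x (interior_subset hx)).hasDerivWithinAt) ?_
  intro x hx
  have hQ := quadratic_form_nonneg hc hdisc √(2 * N x) (1 - cp * x)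
  apply div_nonpos_of_nonpos_of_nonneg _ (by positivity)
  linarith [mul_nonneg hk.le hQ]
end
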